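/- Let G be a context-free grammar over an alphabet T in which every production rule has the form A → a·B (A, B nonterminals, a a terminal) or the form A → a (a a terminal). Then there exists a context-free grammar G' over T, all of whose production rules also have one of these two forms and in which additionally every rule of the form A → a·B satisfies A ≠ B, such that the language generated by G' equals the language generated by G. -/

import Mathlib

/-!
Tag every nonterminal with a bit and let each rule flip it: a rule with input `(A, b)` rewrites
to nonterminals tagged `!b`. Then no rule can reproduce its own input nonterminal, which removes
self-recursion (`(A, true)` plays the role of the paper's primed copy `A'`). Forgetting the bits
turns derivations of the tagged grammar into derivations of the original one, and conversely a
derivation of the original grammar lifts step by step, since every rule is present with both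
tags. The shape `A → a·B` or `A → a` of a rule is preserved by the tagging.
-/

namespace Symbol

variable {T N M : Type*}

def mapNT (f : N → M) : Symbol T N → Symbol T M
  | terminal a => terminal a
  | nonterminal A => nonterminal (f A)

@[simp] lemma mapNT_terminal (f : N → M) (a : T) :
    (terminal a : Symbol T N).mapNT f = terminal a := rfl

@[simp] lemma mapNT_nonterminal (f : N → M) (A : N) :
    (nonterminal A : Symbol T N).mapNT f = nonterminal (f A) := rfl

@[simp] lemma mapNT_mapNT {K : Type*} (f : N → M) (g : M → K) (s : Symbol T N) :
    (s.mapNT f).mapNT g = s.mapNT fun A => g (f A) := by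
  cases s <;> rfl

@[simp] lemma mapNT_id (s : Symbol T N) : s.mapNT (fun A => A) = s := by
  cases s <;> rfl

lemma map_mapNT_eq_map_terminal_iff {f : N → M} {s : List (Symbol T N)} {w : List T} :
    s.map (mapNT f) = w.map terminal ↔ s = w.map terminal := by
  induction s generalizing w with
  | nil => cases w <;> simp
  | cons x s ih => cases w <;> cases x <;> simp [ih]

end Symbol

open Symbol

variable {T : Type*}

namespace ContextFreeRule

variable {N : Type*}

def withParity (r : ContextFreeRule T N) (b : Bool) : ContextFreeRule T (N × Bool) :=
  ⟨(r.input, b), r.output.map (mapNT (·, !b))⟩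

end ContextFreeRule

namespace ContextFreeGrammar

open ContextFreeRule

-- Reducible, so that `g.parityDouble.NT` and `g.NT × Bool` are identified by `simp` and unification.
open Classical in
@[reducible]
noncomputable def parityDouble (g : ContextFreeGrammar T) : ContextFreeGrammar T where
  NT := g.NT × Bool
  initial := (g.initial, false)
  rules := (g.rules ×ˢ Finset.univ).image fun p => p.1.withParity p.2

variable {g : ContextFreeGrammar T}

lemma mem_parityDouble_rules {r : ContextFreeRule T (g.NT × Bool)} :
    r ∈ g.parityDouble.rules ↔ ∃ r₀ ∈ g.rules, ∃ b, r₀.withParity b = r := by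
  simp only [parityDouble, Finset.mem_image, Finset.mem_product, Finset.mem_univ, and_true,
    Prod.exists]
  exact ⟨fun ⟨r₀, b, h, e⟩ => ⟨r₀, h, b, e⟩, fun ⟨r₀, h, b, e⟩ => ⟨r₀, b, h, e⟩⟩

lemma Produces.map_fst {u v : List (Symbol T (g.NT × Bool))}
    (h : g.parityDouble.Produces u v) :
    g.Produces (u.map (mapNT Prod.fst)) (v.map (mapNT Prod.fst)) := by
  obtain ⟨r, hr, hrw⟩ := h
  obtain ⟨r₀, hr₀, b, rfl⟩ := mem_parityDouble_rules.mp hr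
  obtain ⟨p, q, rfl, rfl⟩ := hrw.exists_parts
  refine ⟨r₀, hr₀, rewrites_iff.mpr ⟨p.map (mapNT Prod.fst), q.map (mapNT Prod.fst), ?_, ?_⟩⟩ <;>
    simp [withParity, Function.comp_def]

lemma Derives.map_fst {u v : List (Symbol T (g.NT × Bool))}
    (h : g.parityDouble.Derives u v) :
    g.Derives (u.map (mapNT Prod.fst)) (v.map (mapNT Prod.fst)) := by
  induction h with
  | refl => rfl
  | tail _ hp ih => exact ih.trans_produces hp.map_fst

lemma Produces.exists_parity_lift {u v : List (Symbol T g.NT)} (h : g.Produces u v)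
    {u' : List (Symbol T (g.NT × Bool))} (hu' : u'.map (mapNT Prod.fst) = u) :
    ∃ v', v'.map (mapNT Prod.fst) = v ∧ g.parityDouble.Produces u' v' := by
  obtain ⟨r, hr, hrw⟩ := h
  obtain ⟨p, q, rfl, rfl⟩ := hrw.exists_parts
  obtain ⟨pA', q', rfl, hpA', rfl⟩ := List.map_eq_append_iff.mp hu'
  obtain ⟨p', A', rfl, rfl, hA'⟩ := List.map_eq_append_iff.mp hpA'
  obtain ⟨x, rfl, hx⟩ := List.map_eq_singleton_iff.mp hA'
  rcases x with _ | ⟨A, b⟩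
  · cases hx
  · simp only [mapNT_nonterminal, nonterminal.injEq] at hx
    subst hx
    refine ⟨p' ++ r.output.map (mapNT (·, !b)) ++ q', by simp [Function.comp_def], ?_⟩
    exact ⟨r.withParity b, mem_parityDouble_rules.mpr ⟨r, hr, b, rfl⟩,
      rewrites_of_exists_parts (r.withParity b) p' q'⟩

lemma Derives.exists_parity_lift {u v : List (Symbol T g.NT)} (h : g.Derives u v)
    {u' : List (Symbol T (g.NT × Bool))} (hu' : u'.map (mapNT Prod.fst) = u) :
    ∃ v', v'.map (mapNT Prod.fst) = v ∧ g.parityDouble.Derives u' v' := by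
  induction h with
  | refl => exact ⟨u', hu', Relation.ReflTransGen.refl⟩
  | tail _ hp ih =>
    obtain ⟨w', hw', hd⟩ := ih
    obtain ⟨v', hv', hp'⟩ := hp.exists_parity_lift hw'
    exact ⟨v', hv', hd.trans_produces hp'⟩

theorem language_parityDouble (g : ContextFreeGrammar T) :
    g.parityDouble.language = g.language := by
  ext w
  simp only [mem_language_iff]
  constructor
  · intro h
    simpa [Function.comp_def] using h.map_fst
  · intro h
    obtain ⟨v', hv', hd⟩ :=
      h.exists_parity_lift (u' := [nonterminal g.parityDouble.initial]) rfl
    rwa [map_mapNT_eq_map_terminal_iff.mp hv'] at hd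

end ContextFreeGrammar

/-- Self-recursion elimination for right-linear grammars: if every rule of `G` has the form
`A → a·B` or `A → a`, then there is a grammar `G'` whose rules have the same two forms and
moreover every rule `A → a·B` of `G'` satisfies `A ≠ B`, generating the same language. -/
theorem exists_nonrecursive_right_linear_grammar {T : Type} (G : ContextFreeGrammar T)
    (hG : ∀ r ∈ G.rules,
      (∃ (a : T) (B : G.NT), r.output = [Symbol.terminal a, Symbol.nonterminal B]) ∨
      (∃ a : T, r.output = [Symbol.terminal a])) :
    ∃ G' : ContextFreeGrammar T,
      (∀ r ∈ G'.rules,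
        (∃ (a : T) (B : G'.NT), B ≠ r.input ∧
          r.output = [Symbol.terminal a, Symbol.nonterminal B]) ∨
        (∃ a : T, r.output = [Symbol.terminal a])) ∧
      G'.language = G.language := by
  refine ⟨G.parityDouble, fun r hr => ?_, G.language_parityDouble⟩
  obtain ⟨r₀, hr₀, b, rfl⟩ := ContextFreeGrammar.mem_parityDouble_rules.mp hr
  rcases hG r₀ hr₀ with ⟨a, B, hout⟩ | ⟨a, hout⟩
  · exact Or.inl ⟨a, (B, !b), by simp [ContextFreeRule.withParity],
      by simp [ContextFreeRule.withParity, hout]⟩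
  · exact Or.inr ⟨a, by simp [ContextFreeRule.withParity, hout]⟩
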